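/- Let A, B, C be positive integers with A + B + C = 180. Then (A, B, C) admits a trivial Z-degree subdivision if and only if at least one of the following holds: (i) A, B and C are all even; (ii) A, B and C are all less than 90; (iii) two of A, B, C are equal and each of the two equal angles is greater than 1. -/
import Mathlib


/-- Sine of an angle given in (integer) degrees. -/
noncomputable def sdegN (n : ℕ) : ℝ := Real.sin (n * Real.pi / 180)

/-- A ℤ-degree subdivision of the integer-angled triangle `(A, B, C)`:
a 6-tuple `(u, x, v, y, w, z)` of positive integers with `u + x = A`, `v + y = B`,
`w + z = C` satisfying the trigonometric Ceva relation. -/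
def IsZSubdivision (A B C u x v y w z : ℕ) : Prop :=
  0 < u ∧ 0 < x ∧ 0 < v ∧ 0 < y ∧ 0 < w ∧ 0 < z ∧
  u + x = A ∧ v + y = B ∧ w + z = C ∧
  sdegN u * sdegN v * sdegN w = sdegN x * sdegN y * sdegN z

private lemma multiset_triple_eq {a b c d e f : ℕ} (h : ({a,b,c}:Multiset ℕ) = {d,e,f}) :
    (a=d∧b=e∧c=f)∨(a=d∧b=f∧c=e)∨(a=e∧b=d∧c=f)∨(a=e∧b=f∧c=d)∨(a=f∧b=d∧c=e)∨(a=f∧b=e∧c=d) := by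
  simp [Multiset.insert_eq_cons, Multiset.cons_eq_cons, Multiset.singleton_eq_cons_iff] at h
  aesop

private lemma multiset_perm3 (a b c : ℕ) :
    ({b,c,a} : Multiset ℕ) = {a,b,c} ∧ ({c,a,b} : Multiset ℕ) = {a,b,c} ∧
    ({b,a,c} : Multiset ℕ) = {a,b,c} ∧ ({a,c,b} : Multiset ℕ) = {a,b,c} ∧
    ({c,b,a} : Multiset ℕ) = {a,b,c} := by
  simp only [Multiset.insert_eq_cons, ← Multiset.singleton_add]
  refine ⟨?_, ?_, ?_, ?_, ?_⟩ <;> ac_rfl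

/-- A ℤ-degree triangle admits a trivial ℤ-degree subdivision (one where `(x, y, z)`
is a permutation of `(u, v, w)`) iff all angles are even, or all are less than 90,
or two angles are equal and each of the equal angles exceeds 1. -/
theorem trivial_Z_subdivision_iff (A B C : ℕ)
    (hA : 0 < A) (hB : 0 < B) (hC : 0 < C) (hsum : A + B + C = 180) :
    (∃ u x v y w z : ℕ, IsZSubdivision A B C u x v y w z ∧
        ({x, y, z} : Multiset ℕ) = ({u, v, w} : Multiset ℕ)) ↔
      ((Even A ∧ Even B ∧ Even C) ∨
       (A < 90 ∧ B < 90 ∧ C < 90) ∨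
       ((A = B ∧ 1 < A) ∨ (B = C ∧ 1 < B) ∨ (A = C ∧ 1 < A))) := by
  constructor
  · rintro ⟨u, x, v, y, w, z, ⟨hu, hx, hv, hy, hw, hz, hAx, hBy, hCz, -⟩, hm⟩
    rcases multiset_triple_eq hm with ⟨h1,h2,h3⟩|⟨h1,h2,h3⟩|⟨h1,h2,h3⟩|⟨h1,h2,h3⟩|⟨h1,h2,h3⟩|⟨h1,h2,h3⟩
    · -- x=u, y=v, z=w : all even
      exact Or.inl ⟨⟨u, by omega⟩, ⟨v, by omega⟩, ⟨w, by omega⟩⟩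
    · -- x=u, y=w, z=v : B = C
      exact Or.inr (Or.inr (Or.inr (Or.inl ⟨by omega, by omega⟩)))
    · -- x=v, y=u, z=w : A = B
      exact Or.inr (Or.inr (Or.inl ⟨by omega, by omega⟩))
    · -- x=v, y=w, z=u : cyclic, all < 90
      exact Or.inr (Or.inl ⟨by omega, by omega, by omega⟩)
    · -- x=w, y=u, z=v : cyclic, all < 90
      exact Or.inr (Or.inl ⟨by omega, by omega, by omega⟩)
    · -- x=w, y=v, z=u : A = C
      exact Or.inr (Or.inr (Or.inr (Or.inr ⟨by omega, by omega⟩)))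
  · rintro (⟨⟨a, ha⟩, ⟨b, hb⟩, ⟨c, hc⟩⟩ | ⟨hA90, hB90, hC90⟩ |
      ⟨hAB, hA1⟩ | ⟨hBC, hB1⟩ | ⟨hAC, hA1⟩)
    · exact ⟨a, a, b, b, c, c,
        ⟨by omega, by omega, by omega, by omega, by omega, by omega,
         by omega, by omega, by omega, rfl⟩, rfl⟩
    · -- cyclic: u = 90-B, v = A+B-90, w = 90-A, x=v, y=w, z=u
      refine ⟨90-B, A+B-90, A+B-90, 90-A, 90-A, 90-B,
        ⟨by omega, by omega, by omega, by omega, by omega, by omega,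
         by omega, by omega, by omega, by ring⟩, ?_⟩
      exact (multiset_perm3 (90-B) (A+B-90) (90-A)).1
    · -- A = B: u=1, x=A-1, v=A-1, y=1, w=z=C/2
      refine ⟨1, A-1, A-1, 1, C/2, C/2,
        ⟨by omega, by omega, by omega, by omega, by omega, by omega,
         by omega, by omega, by omega, by ring⟩, ?_⟩
      exact (multiset_perm3 1 (A-1) (C/2)).2.2.1
    · -- B = C: v=1, y=B-1, w=B-1, z=1, u=x=A/2
      refine ⟨A/2, A/2, 1, B-1, B-1, 1,
        ⟨by omega, by omega, by omega, by omega, by omega, by omega,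
         by omega, by omega, by omega, by ring⟩, ?_⟩
      exact (multiset_perm3 (A/2) 1 (B-1)).2.2.2.1
    · -- A = C: u=1, x=A-1, w=A-1, z=1, v=y=B/2
      refine ⟨1, A-1, B/2, B/2, A-1, 1,
        ⟨by omega, by omega, by omega, by omega, by omega, by omega,
         by omega, by omega, by omega, by ring⟩, ?_⟩
      exact (multiset_perm3 1 (B/2) (A-1)).2.2.2.2
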